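/- arXiv:2001.00278 — 10 statements merged into one kernel-verified Lean document; each statement's English description precedes it below -/
import Mathlib

section
/- Let F be a vertex-preserving endofunctor on the category of directed graphs (with self-loops, morphisms being edge-preserving maps). Then F is arrow increasing (i.e., G embeds into F(G) for every graph G) if and only if F(L2) is L2 or K2, where L2 is the two-vertex graph with a single arrow a1→a2. -/
/-!
Every arrow `x → y` of a graph is the image of the arrow of `L2` under the graph map
`0 ↦ x, 1 ↦ y`, so by functoriality `F` is arrow increasing as soon as `F(L2)` keeps the
arrow `0 → 1` (a collapsed arrow `x = y` is a self-loop). A reflexive relation on two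
vertices containing `0 → 1` is `L2` or `K2`, according to whether it contains `1 → 0`.
-/

/-- A graph map between directed graphs (vertices `V`, arrow relation `E`):
it sends every arrow to an arrow or collapses it to a single vertex
(self-loops are implicitly present / handled by reflexivity). -/
def IsGraphMap {V W : Type} (E : V → V → Prop) (E' : W → W → Prop) (φ : V → W) : Prop :=
  ∀ x y, E x y → E' (φ x) (φ y) ∨ φ x = φ y

/-- A vertex-preserving endofunctor on the category of finite directed graphs
(graphs are reflexive relations, since all self-loops are present; the functor
keeps the vertex set fixed and sends each graph map to itself). -/
structure GraphFunctor where
  obj : ∀ (V : Type) [Finite V], (V → V → Prop) → (V → V → Prop)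
  refl : ∀ (V : Type) [Finite V] (E : V → V → Prop), Reflexive E → Reflexive (obj V E)
  map : ∀ (V W : Type) [Finite V] [Finite W] (E : V → V → Prop) (E' : W → W → Prop)
      (φ : V → W), Reflexive E → Reflexive E' →
      IsGraphMap E E' φ → IsGraphMap (obj V E) (obj W E') φ

/-- The two-vertex line graph `L2` : a single arrow `0 → 1` (plus self-loops). -/
def L2rel : Fin 2 → Fin 2 → Prop := fun a b => a = b ∨ (a = 0 ∧ b = 1)

/-- The complete graph `K2` on two vertices. -/
def K2rel : Fin 2 → Fin 2 → Prop := fun _ _ => True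

/-- The discrete graph `D2` on two vertices (only self-loops). -/
def D2rel : Fin 2 → Fin 2 → Prop := fun a b => a = b

lemma L2rel_refl : Reflexive L2rel := fun _ => Or.inl rfl

lemma L2rel_zero_one : L2rel 0 1 := Or.inr ⟨rfl, rfl⟩

lemma K2rel_zero_one : K2rel 0 1 := trivial

lemma eq_L2rel_or_K2rel_of_reflexive {R : Fin 2 → Fin 2 → Prop} (hR : Reflexive R) (h01 : R 0 1) :
    R = L2rel ∨ R = K2rel := by
  by_cases h10 : R 1 0
  · right
    funext a b
    fin_cases a <;> fin_cases b <;> simp [K2rel, hR _, h01, h10]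
  · left
    funext a b
    fin_cases a <;> fin_cases b <;> simp [L2rel, hR _, h01, h10]

lemma isGraphMap_L2rel {V : Type} {E : V → V → Prop} {x y : V} (hxy : E x y) :
    IsGraphMap L2rel E ![x, y] := by
  rintro a b (rfl | ⟨rfl, rfl⟩)
  · exact Or.inr rfl
  · exact Or.inl hxy

namespace GraphFunctor

def ArrowIncreasing (F : GraphFunctor) : Prop :=
  ∀ (V : Type) [Finite V] (E : V → V → Prop), Reflexive E → ∀ x y, E x y → F.obj V E x y

theorem arrowIncreasing_iff_obj_L2rel (F : GraphFunctor) :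
    F.ArrowIncreasing ↔ F.obj (Fin 2) L2rel 0 1 := by
  refine ⟨fun h => h (Fin 2) L2rel L2rel_refl 0 1 L2rel_zero_one, fun h V _ E hE x y hxy => ?_⟩
  have hF := F.map (Fin 2) V L2rel E ![x, y] L2rel_refl hE (isGraphMap_L2rel hxy) 0 1 h
  simp only [Matrix.cons_val_zero, Matrix.cons_val_one] at hF
  rcases hF with hF | rfl
  · exact hF
  · exact F.refl V E hE x

end GraphFunctor

/-- F is arrow increasing iff F(L2) is L2 or K2. -/
theorem arrow_increasing_iff (F : GraphFunctor) :
    (∀ (V : Type) [Finite V] (E : V → V → Prop), Reflexive E →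
        ∀ x y, E x y → F.obj V E x y) ↔
    (F.obj (Fin 2) L2rel = L2rel ∨ F.obj (Fin 2) L2rel = K2rel) := by
  refine F.arrowIncreasing_iff_obj_L2rel.trans
    ⟨eq_L2rel_or_K2rel_of_reflexive (F.refl _ _ L2rel_refl), ?_⟩
  rintro (h | h) <;> rw [h]
  exacts [L2rel_zero_one, K2rel_zero_one]
end

section
/- Let F be a vertex-preserving endofunctor on directed graphs. If F(D2) ≠ D2 (where D2 is the two-vertex graph with no non-loop arrows), then F is the full completion functor, i.e., F(G) is the complete graph on the vertex set of G for every graph G. -/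
theorem isGraphMap_of_discrete {V W : Type} (E' : W → W → Prop) (φ : V → W) :
    IsGraphMap (· = ·) E' φ := by
  rintro x y rfl
  exact Or.inr rfl

namespace GraphFunctor

variable (F : GraphFunctor)

theorem exists_ne_obj_of_obj_ne {V : Type} [Finite V]
    (h : F.obj V (· = ·) ≠ (· = ·)) : ∃ a b, a ≠ b ∧ F.obj V (· = ·) a b := by
  by_contra! hloops
  refine h (funext₂ fun a b => propext ⟨fun hab => ?_, ?_⟩)
  · by_contra hne
    exact hloops a b hne hab
  · rintro rfl
    exact F.refl V _ (fun _ => rfl) a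

theorem obj_apply_of_isGraphMap {V W : Type} [Finite V] [Finite W] {E : V → V → Prop}
    {E' : W → W → Prop} (hE : Reflexive E) (hE' : Reflexive E') {φ : V → W}
    (hφ : IsGraphMap E E' φ) {a b : V} (hab : F.obj V E a b) : F.obj W E' (φ a) (φ b) := by
  rcases F.map V W E E' φ hE hE' hφ a b hab with hφab | hφab
  · exact hφab
  · rw [hφab]
    exact F.refl W E' hE' (φ b)

theorem obj_D2rel_zero_one (h : F.obj (Fin 2) D2rel ≠ D2rel) : F.obj (Fin 2) D2rel 0 1 := by
  obtain ⟨a, b, hne, hab⟩ := F.exists_ne_obj_of_obj_ne h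
  fin_cases a <;> fin_cases b
  · exact absurd rfl hne
  · exact hab
  · exact F.obj_apply_of_isGraphMap (fun _ => rfl) (fun _ => rfl)
      (isGraphMap_of_discrete _ Fin.rev) hab
  · exact absurd rfl hne

theorem obj_complete_of_obj_D2rel_zero_one (h01 : F.obj (Fin 2) D2rel 0 1)
    (V : Type) [Finite V] (E : V → V → Prop) (hE : Reflexive E) (x y : V) : F.obj V E x y :=
  F.obj_apply_of_isGraphMap (fun _ => rfl) hE (isGraphMap_of_discrete E ![x, y]) h01

end GraphFunctor

/-- if F(D2) ≠ D2 then F is the full completion functor. -/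
theorem full_completion_of_D2 (F : GraphFunctor)
    (h : F.obj (Fin 2) D2rel ≠ D2rel) :
    ∀ (V : Type) [Finite V] (E : V → V → Prop), Reflexive E →
      ∀ x y, F.obj V E x y :=
  F.obj_complete_of_obj_D2rel_zero_one (F.obj_D2rel_zero_one h)
end

section
/- Let F be a vertex-preserving endofunctor on directed graphs. If F(K2) ≠ K2 (where K2 is the complete graph on two vertices), then F is the full disconnection functor, i.e., F(G) is the totally disconnected graph on the vertex set of G for every graph G. -/
namespace GraphFunctor

theorem obj_complete_of_obj_of_ne (F : GraphFunctor) {V W : Type} [Finite V] [Finite W]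
    {E : V → V → Prop} (hE : Reflexive E) {x y : V} (hxy : F.obj V E x y) (hne : x ≠ y)
    (a b : W) : F.obj W (fun _ _ => True) a b := by
  classical
  let φ : V → W := fun v => if v = x then a else b
  have hφ : IsGraphMap E (fun _ _ => True) φ := fun _ _ _ => Or.inl trivial
  have hpush := F.map V W E _ φ hE (fun _ => trivial) hφ x y hxy
  rw [show φ x = a from if_pos rfl, show φ y = b from if_neg hne.symm] at hpush
  rcases hpush with hab | rfl
  · exact hab
  · exact F.refl W _ (fun _ => trivial) a

end GraphFunctor

/-- if F(K2) ≠ K2 then F is the full disconnection functor. -/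
theorem full_disconnection_of_K2 (F : GraphFunctor)
    (h : F.obj (Fin 2) K2rel ≠ K2rel) :
    ∀ (V : Type) [Finite V] (E : V → V → Prop), Reflexive E →
      ∀ x y, F.obj V E x y ↔ x = y := by
  intro V _ E hE x y
  refine ⟨fun hxy => ?_, fun hxy => hxy ▸ F.refl V E hE x⟩
  by_contra hne
  exact h (funext₂ fun a b => eq_true (F.obj_complete_of_obj_of_ne hE hxy hne a b))
end

section
/- Let F be a vertex-preserving endofunctor on directed graphs that is not the full disconnection functor. Then F(Kn)=Kn for every n, where Kn is the complete graph on n vertices. -/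
/-!
If `F` is not the full disconnection functor, some reflexive graph `E` on `V` has an arrow
`x → y` in `F E` with `x ≠ y`. Given distinct vertices `a, b` of a complete graph `K`, the map
`V → K` sending `x` to `a` and everything else to `b` is a graph map (every map into a complete
graph is), so functoriality carries the arrow `x → y` of `F E` to an arrow `a → b` of `F K`.
-/

theorem isGraphMap_complete {V W : Type} (E : V → V → Prop) (φ : V → W) :
    IsGraphMap E (fun _ _ => True) φ :=
  fun _ _ _ => Or.inl trivial

namespace GraphFunctor

theorem exists_obj_ne_of_ne_disconnection (F : GraphFunctor)
    (h : ¬ ∀ (V : Type) [Finite V] (E : V → V → Prop), Reflexive E →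
        ∀ x y, F.obj V E x y ↔ x = y) :
    ∃ (V : Type) (_ : Finite V) (E : V → V → Prop) (x y : V),
      Reflexive E ∧ F.obj V E x y ∧ x ≠ y := by
  push Not at h
  obtain ⟨V, _, E, hE, x, y, hxy⟩ := h
  rcases hxy with ⟨hFxy, hne⟩ | ⟨hnot, rfl⟩
  · exact ⟨V, inferInstance, E, x, y, hE, hFxy, hne⟩
  · exact absurd (F.refl V E hE x) hnot

theorem obj_complete_of_obj_ne (F : GraphFunctor) {V : Type} [Finite V]
    {E : V → V → Prop} (hE : Reflexive E) {x y : V} (hFxy : F.obj V E x y) (hne : x ≠ y)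
    (W : Type) [Finite W] :
    F.obj W (fun _ _ => True) = fun _ _ => True := by
  classical
  have hK : Reflexive (fun _ _ : W => True) := fun _ => trivial
  funext a b
  refine propext ⟨fun _ => trivial, fun _ => ?_⟩
  by_cases hab : a = b
  · exact hab ▸ F.refl W _ hK a
  · let φ : V → W := fun z => if z = x then a else b
    have hφ := F.map V W E _ φ hE hK (isGraphMap_complete E φ) x y hFxy
    simp only [φ, if_pos rfl, if_neg hne.symm] at hφ
    exact hφ.resolve_right hab

end GraphFunctor

/-- if F is not the full disconnection functor then F(Kn) = Kn for all n. -/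
theorem complete_graphs_fixed (F : GraphFunctor)
    (h : ¬ ∀ (V : Type) [Finite V] (E : V → V → Prop), Reflexive E →
        ∀ x y, F.obj V E x y ↔ x = y) :
    ∀ n : ℕ, F.obj (Fin n) (fun _ _ => True) = fun _ _ => True := by
  obtain ⟨V, _, E, x, y, hE, hFxy, hne⟩ := F.exists_obj_ne_of_ne_disconnection h
  exact fun n => F.obj_complete_of_obj_ne hE hFxy hne (Fin n)
end

section
/- For any symmetric directed graph G (with self-loops) and any vertices v, v' of G, there exists a graph map φ: G → G with φ(v)=v' and φ(v')=v. -/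
/-!
If `v'` is not reachable from `v`, send the connected component of `v` to `v'` and everything
else to `v`. Otherwise fix a geodesic `p` from `v` to `v'` of length `n` and send `x` to the vertex
of `p` at position `n - d(v, x)`: adjacent vertices have distances from `v` differing by at most
one, so their images are equal or consecutive on `p`, and `v`, `v'` land at positions `n`, `0`.
-/

namespace SimpleGraph

variable {V : Type} {G : SimpleGraph V}

lemma Walk.adj_getVert_succ_or_eq {u w : V} (p : G.Walk u w) (i : ℕ) :
    G.Adj (p.getVert i) (p.getVert (i + 1)) ∨ p.getVert i = p.getVert (i + 1) := by
  rcases lt_or_ge i p.length with hi | hi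
  · exact Or.inl (p.adj_getVert_succ hi)
  · exact Or.inr (by rw [p.getVert_of_length_le hi, p.getVert_of_length_le (by omega)])

lemma isGraphMap_getVert_comp {u w : V} (p : G.Walk u w) {f : V → ℕ}
    (hf : ∀ x y, G.Adj x y → f y ≤ f x + 1) :
    IsGraphMap G.Adj G.Adj fun x => p.getVert (f x) := by
  intro x y hxy
  dsimp only
  have hyx := hf x y hxy
  have hxy' := hf y x hxy.symm
  rcases Nat.lt_trichotomy (f x) (f y) with hlt | heq | hgt
  · rw [show f y = f x + 1 by omega]
    exact p.adj_getVert_succ_or_eq _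
  · exact Or.inr (congrArg p.getVert heq)
  · rw [show f x = f y + 1 by omega]
    exact (p.adj_getVert_succ_or_eq _).imp Adj.symm Eq.symm

lemma isGraphMap_comp_connectedComponentMk {W : Type} (E : W → W → Prop)
    (g : G.ConnectedComponent → W) :
    IsGraphMap G.Adj E fun x => g (G.connectedComponentMk x) :=
  fun _ _ hxy => Or.inr (congrArg g (ConnectedComponent.connectedComponentMk_eq_of_adj hxy))

theorem exists_isGraphMap_swap (G : SimpleGraph V) (v v' : V) :
    ∃ φ : V → V, IsGraphMap G.Adj G.Adj φ ∧ φ v = v' ∧ φ v' = v := by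
  classical
  by_cases hreach : G.Reachable v v'
  · obtain ⟨p, hp⟩ := hreach.exists_walk_length_eq_dist
    refine ⟨fun x => p.getVert (G.dist v v' - G.dist v x), isGraphMap_getVert_comp p ?_, ?_, ?_⟩
    · intro x y hxy
      rcases hxy.diff_dist_adj (u := v) with h | h | h <;> omega
    · simp [← hp]
    · simp
  · let g : G.ConnectedComponent → V := fun c => if c = G.connectedComponentMk v then v' else v
    refine ⟨fun x => g (G.connectedComponentMk x), isGraphMap_comp_connectedComponentMk _ g,
      by simp [g], ?_⟩
    simp [g, ConnectedComponent.eq, hreach.imp Reachable.symm]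

end SimpleGraph

lemma isGraphMap_of_isGraphMap_fromRel {V : Type} {E : V → V → Prop} (hsym : Symmetric E)
    {φ : V → V} (hφ : IsGraphMap (SimpleGraph.fromRel E).Adj (SimpleGraph.fromRel E).Adj φ) :
    IsGraphMap E E φ := by
  intro x y hxy
  by_cases hne : x = y
  · exact Or.inr (congrArg φ hne)
  · refine (hφ x y ⟨hne, Or.inl hxy⟩).imp_left fun h => ?_
    exact h.2.elim id (@hsym _ _)

theorem symmetric_swap_map_general {V : Type} (E : V → V → Prop)
    (hsym : Symmetric E) (v v' : V) :
    ∃ φ : V → V, IsGraphMap E E φ ∧ φ v = v' ∧ φ v' = v := by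
  obtain ⟨φ, hφ, hv, hv'⟩ := (SimpleGraph.fromRel E).exists_isGraphMap_swap v v'
  exact ⟨φ, isGraphMap_of_isGraphMap_fromRel hsym hφ, hv, hv'⟩

/-- any symmetric graph admits a graph self-map swapping two given vertices. -/
theorem symmetric_swap_map {V : Type} [Finite V] (E : V → V → Prop)
    (hrefl : Reflexive E) (hsym : Symmetric E) (v v' : V) :
    ∃ φ : V → V, IsGraphMap E E φ ∧ φ v = v' ∧ φ v' = v :=
  symmetric_swap_map_general E hsym v v'
end

section
/- Let F be a vertex-preserving endofunctor on directed graphs and let A = {ω : F(ω) is the complete graph on the vertices of ω} be its set of completions. Then F^A ≤ F^ls ∘ F ≤ F, where F^A is the functor represented by A and F^ls is lower symmetrization. -/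
/-! A completion `ω` of `F` maps into `G` through a graph map `φ`; functoriality carries the
complete graph `F(ω)` into `F(G)`, where arrows collapsed by `φ` become self-loops. So any two
vertices in the image of `φ` are joined in `F(G)` in both directions. -/

theorem IsGraphMap.rel_of_refl {V W : Type} {E : V → V → Prop} {E' : W → W → Prop} {φ : V → W}
    (hφ : IsGraphMap E E' φ) (hE' : Reflexive E') {x y : V} (h : E x y) : E' (φ x) (φ y) :=
  (hφ x y h).elim id fun hxy => hxy ▸ hE' (φ x)

theorem GraphFunctor.obj_rel_map (F : GraphFunctor) {V W : Type} [Finite V] [Finite W]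
    {E : V → V → Prop} {E' : W → W → Prop} (hE : Reflexive E) (hE' : Reflexive E')
    {φ : V → W} (hφ : IsGraphMap E E' φ) {x y : V} (h : F.obj V E x y) :
    F.obj W E' (φ x) (φ y) :=
  (F.map V W E E' φ hE hE' hφ).rel_of_refl (F.refl W E' hE') h

/-- with A = Comp(F) the set of completions of F, we have
F^A ≤ F^ls ∘ F ≤ F. -/
theorem completions_bound (F : GraphFunctor)
    (V : Type) [Finite V] (E : V → V → Prop) (hE : Reflexive E) (v v' : V) :
    ((∃ (W : Type) (iW : Finite W) (EW : W → W → Prop), Reflexive EW ∧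
        (∀ a b, @GraphFunctor.obj F W iW EW a b) ∧
        ∃ φ : W → V, IsGraphMap EW E φ ∧ (∃ a, φ a = v) ∧ (∃ b, φ b = v')) →
      (F.obj V E v v' ∧ F.obj V E v' v)) ∧
    ((F.obj V E v v' ∧ F.obj V E v' v) → F.obj V E v v') := by
  refine ⟨?_, And.left⟩
  rintro ⟨W, iW, EW, hEW, hcomplete, φ, hφ, ⟨a, rfl⟩, ⟨b, rfl⟩⟩
  exact ⟨F.obj_rel_map hEW hE hφ (hcomplete a b), F.obj_rel_map hEW hE hφ (hcomplete b a)⟩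
end

section
/- If F is a representable endofunctor, F = F^Ω for some family Ω of graphs, and A = Comp(F) = {ω : F(ω) is complete}, then F = F^A. -/
/-- The relation of the representable functor F^Ω on a graph (V,E). -/
def repRel {ι : Type} (Vω : ι → Type) (Eω : ∀ i, Vω i → Vω i → Prop)
    {V : Type} (E : V → V → Prop) : V → V → Prop := fun v v' =>
  ∃ (i : ι) (φ : Vω i → V), IsGraphMap (Eω i) E φ ∧ (∃ a, φ a = v) ∧ (∃ b, φ b = v')

theorem isGraphMap_id {V : Type} (E : V → V → Prop) : IsGraphMap E E id :=
  fun _ _ hxy => Or.inl hxy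

theorem repRel_self {ι : Type} (Vω : ι → Type) (Eω : ∀ i, Vω i → Vω i → Prop) (i : ι)
    (a b : Vω i) : repRel Vω Eω (Eω i) a b :=
  ⟨i, id, isGraphMap_id (Eω i), ⟨a, rfl⟩, ⟨b, rfl⟩⟩

theorem GraphFunctor.obj_map_of_complete (F : GraphFunctor) {W V : Type} [Finite W] [Finite V]
    {EW : W → W → Prop} {E : V → V → Prop} (hEW : Reflexive EW) (hE : Reflexive E)
    (hcomplete : ∀ a b, F.obj W EW a b) {φ : W → V} (hφ : IsGraphMap EW E φ) (a b : W) :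
    F.obj V E (φ a) (φ b) := by
  rcases F.map W V EW E φ hEW hE hφ a b (hcomplete a b) with h | h
  · exact h
  · rw [h]
    exact F.refl V E hE _

/-- a representable functor F = F^Ω is also represented by its
set of completions A = Comp(F) = { ω | F(ω) is complete }. -/
theorem representable_by_completions (F : GraphFunctor)
    {ι : Type} (Vω : ι → Type) [∀ i, Finite (Vω i)]
    (Eω : ∀ i, Vω i → Vω i → Prop) (hEω : ∀ i, Reflexive (Eω i))
    (hrep : ∀ (V : Type) [Finite V] (E : V → V → Prop), Reflexive E →
        ∀ v v', F.obj V E v v' ↔ repRel Vω Eω E v v') :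
    ∀ (V : Type) [Finite V] (E : V → V → Prop), Reflexive E →
      ∀ v v', F.obj V E v v' ↔
        ∃ (W : Type) (iW : Finite W) (EW : W → W → Prop), Reflexive EW ∧
          (∀ a b, @GraphFunctor.obj F W iW EW a b) ∧
          ∃ φ : W → V, IsGraphMap EW E φ ∧ (∃ a, φ a = v) ∧ (∃ b, φ b = v') := by
  intro V _ E hE v v'
  constructor
  · intro h
    obtain ⟨i, φ, hφ, ha, hb⟩ := (hrep V E hE v v').mp h
    have hcomplete : ∀ a b, F.obj (Vω i) (Eω i) a b := fun a b =>
      (hrep (Vω i) (Eω i) (hEω i) a b).mpr (repRel_self Vω Eω i a b)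
    exact ⟨Vω i, inferInstance, Eω i, hEω i, hcomplete, φ, hφ, ha, hb⟩
  · rintro ⟨W, _, EW, hEW, hcomplete, φ, hφ, ⟨a, rfl⟩, ⟨b, rfl⟩⟩
    exact F.obj_map_of_complete hEW hE hcomplete hφ a b
end

section
/- Let F be a vertex-preserving endofunctor on directed graphs with F ≠ F^disc and F ≠ F^comp. Then F^ls ≤ F ≤ F^conn, i.e., for every graph G: every arrow of the lower symmetrization of G is an arrow of F(G), and every arrow of F(G) connects vertices lying in the same weakly connected component of G. -/
/-!
Transporting arrows of `F(K2)` and `F(D2)` along graph maps does all the work. If `F(K2)` had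
no arrow `0 → 1`, collapsing any graph onto `K2` by separating two vertices would show that `F`
is discrete; otherwise `K2 → G` picking a symmetric pair carries that arrow into `F(G)`.
Dually, an arrow of `F(G)` between weakly disconnected vertices is sent, by the indicator of a
weak component, to an arrow `0 → 1` of `F(D2)`, and `D2` maps onto any pair of vertices of
any graph, so `F` would be complete.
-/

namespace GraphFunctor

variable (F : GraphFunctor)

theorem obj_map {V W : Type} [Finite V] [Finite W] {E : V → V → Prop} {E' : W → W → Prop}
    {φ : V → W} (hE : Reflexive E) (hE' : Reflexive E') (hφ : IsGraphMap E E' φ) {x y : V}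
    (h : F.obj V E x y) : F.obj W E' (φ x) (φ y) :=
  (F.map V W E E' φ hE hE' hφ x y h).elim id fun heq => heq ▸ F.refl W E' hE' (φ x)

theorem obj_K2_of_obj_of_ne {V : Type} [Finite V] {E : V → V → Prop} (hE : Reflexive E)
    {x y : V} (h : F.obj V E x y) (hxy : x ≠ y) : F.obj (Fin 2) K2rel 0 1 := by
  classical
  have hφ : IsGraphMap E K2rel (fun v => if v = x then 0 else 1) :=
    fun _ _ _ => Or.inl trivial
  simpa [hxy.symm] using F.obj_map hE (fun _ => trivial) hφ h

theorem isGraphMap_K2_of_symm {V : Type} {E : V → V → Prop} (hE : Reflexive E) {x y : V}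
    (hxy : E x y) (hyx : E y x) : IsGraphMap K2rel E ![x, y] := by
  intro i j _
  left
  fin_cases i <;> fin_cases j <;> simp [hxy, hyx, hE x, hE y]

theorem obj_of_obj_K2 (hK2 : F.obj (Fin 2) K2rel 0 1) {V : Type} [Finite V]
    {E : V → V → Prop} (hE : Reflexive E) {x y : V} (hxy : E x y) (hyx : E y x) :
    F.obj V E x y := by
  simpa using F.obj_map (fun _ => trivial) hE (isGraphMap_K2_of_symm hE hxy hyx) hK2

theorem obj_of_obj_D2 (hD2 : F.obj (Fin 2) D2rel 0 1) {V : Type} [Finite V]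
    {E : V → V → Prop} (hE : Reflexive E) (x y : V) : F.obj V E x y := by
  have hφ : IsGraphMap D2rel E ![x, y] := fun _ _ hij => Or.inr (congrArg _ hij)
  simpa using F.obj_map (fun _ => rfl) hE hφ hD2

theorem obj_D2_of_obj_of_not_reflTransGen {V : Type} [Finite V] {E : V → V → Prop}
    (hE : Reflexive E) {x y : V} (h : F.obj V E x y)
    (hxy : ¬ Relation.ReflTransGen (fun a b => E a b ∨ E b a) x y) :
    F.obj (Fin 2) D2rel 0 1 := by
  classical
  set C := Relation.ReflTransGen (fun a b => E a b ∨ E b a) x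
  have hC : ∀ u v, E u v → (C u ↔ C v) := fun _ _ huv =>
    ⟨fun hu => hu.tail (Or.inl huv), fun hv => hv.tail (Or.inr huv)⟩
  have hφ : IsGraphMap E D2rel (fun v => if C v then 0 else 1) := fun u v huv =>
    Or.inr (by simp only [hC u v huv])
  have := F.obj_map hE (fun _ => rfl) hφ h
  rwa [if_pos Relation.ReflTransGen.refl, if_neg hxy] at this

end GraphFunctor

/-- if F is neither full disconnection nor full completion then
F^ls ≤ F ≤ F^conn. -/
theorem ls_le_F_le_conn (F : GraphFunctor)
    (hdisc : ¬ ∀ (V : Type) [Finite V] (E : V → V → Prop), Reflexive E →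
        ∀ x y, F.obj V E x y ↔ x = y)
    (hcomp : ¬ ∀ (V : Type) [Finite V] (E : V → V → Prop), Reflexive E →
        ∀ x y, F.obj V E x y) :
    ∀ (V : Type) [Finite V] (E : V → V → Prop), Reflexive E → ∀ x y,
      (E x y ∧ E y x → F.obj V E x y) ∧
      (F.obj V E x y → Relation.ReflTransGen (fun a b => E a b ∨ E b a) x y) := by
  have hK2 : F.obj (Fin 2) K2rel 0 1 := by
    by_contra hK2
    refine hdisc fun V _ E hE x y => ⟨fun h => ?_, fun hxy => hxy ▸ F.refl V E hE x⟩
    by_contra hxy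
    exact hK2 (F.obj_K2_of_obj_of_ne hE h hxy)
  have hD2 : ¬ F.obj (Fin 2) D2rel 0 1 := fun hD2 =>
    hcomp fun V _ E hE => F.obj_of_obj_D2 hD2 hE
  intro V _ E hE x y
  refine ⟨fun ⟨hxy, hyx⟩ => F.obj_of_obj_K2 hK2 hE hxy hyx, fun h => ?_⟩
  by_contra hxy
  exact hD2 (F.obj_D2_of_obj_of_not_reflTransGen hE h hxy)
end

section
/- Let Ω be a family of graphs. Then Ω is wedge covered (Ω∨Ω ≼ Ω) if and only if F^Ω is a clustering functor, i.e., F^Ω(G) is symmetric and transitive for every graph G. -/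
/-- The vertex set of the wedge (ω_{i₁}, p₁) ∨ (ω_{i₂}, p₂): the disjoint union
with p₁ identified with p₂. -/
def WedgeV {ι : Type} (Vω : ι → Type) (i₁ i₂ : ι) (p₁ : Vω i₁) (p₂ : Vω i₂) : Type :=
  Quot (fun a b : Vω i₁ ⊕ Vω i₂ => a = Sum.inl p₁ ∧ b = Sum.inr p₂)

/-- The arrows of the wedge: arrows coming from either of the two summands. -/
def wedgeRel {ι : Type} (Vω : ι → Type) (Eω : ∀ i, Vω i → Vω i → Prop)
    (i₁ i₂ : ι) (p₁ : Vω i₁) (p₂ : Vω i₂) :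
    WedgeV Vω i₁ i₂ p₁ p₂ → WedgeV Vω i₁ i₂ p₁ p₂ → Prop := fun x y =>
  (∃ a b, Eω i₁ a b ∧
      x = Quot.mk (fun a b : Vω i₁ ⊕ Vω i₂ => a = Sum.inl p₁ ∧ b = Sum.inr p₂) (Sum.inl a) ∧
      y = Quot.mk (fun a b : Vω i₁ ⊕ Vω i₂ => a = Sum.inl p₁ ∧ b = Sum.inr p₂) (Sum.inl b)) ∨
  (∃ a b, Eω i₂ a b ∧
      x = Quot.mk (fun a b : Vω i₁ ⊕ Vω i₂ => a = Sum.inl p₁ ∧ b = Sum.inr p₂) (Sum.inr a) ∧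
      y = Quot.mk (fun a b : Vω i₁ ⊕ Vω i₂ => a = Sum.inl p₁ ∧ b = Sum.inr p₂) (Sum.inr b))

/-!
Symmetry of `F^Ω` is automatic. Two `Ω`-images meeting in a vertex are the image of a wedge
of members of `Ω` under the map glued from the two; covering that wedge by a single member of
`Ω` gives transitivity. Conversely, in a wedge every vertex shares an `Ω`-image (one of the
two summands) with the wedge point, so symmetry and transitivity of `F^Ω` on the wedge cover
any two of its vertices by one member of `Ω`.
-/

lemma IsGraphMap.comp {V W X : Type} {E : V → V → Prop} {E' : W → W → Prop}
    {E'' : X → X → Prop} {φ : V → W} {ψ : W → X}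
    (hψ : IsGraphMap E' E'' ψ) (hφ : IsGraphMap E E' φ) : IsGraphMap E E'' (ψ ∘ φ) := by
  intro x y hxy
  rcases hφ x y hxy with h | h
  · exact hψ _ _ h
  · exact Or.inr (congrArg ψ h)

section Wedge

variable {ι : Type} {Vω : ι → Type} {Eω : ∀ i, Vω i → Vω i → Prop}

lemma repRel_symmetric {V : Type} (E : V → V → Prop) : Symmetric (repRel Vω Eω E) := by
  rintro v v' ⟨i, φ, hφ, hv, hv'⟩
  exact ⟨i, φ, hφ, hv', hv⟩

/-- `Ω ∨ Ω ≼ Ω`, phrased as: `F^Ω` relates any two vertices of a wedge. -/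
def WedgeCovered (Vω : ι → Type) (Eω : ∀ i, Vω i → Vω i → Prop) : Prop :=
  ∀ (i₁ i₂ : ι) (p₁ : Vω i₁) (p₂ : Vω i₂) (x y : WedgeV Vω i₁ i₂ p₁ p₂),
    repRel Vω Eω (wedgeRel Vω Eω i₁ i₂ p₁ p₂) x y

variable {i₁ i₂ : ι} {p₁ : Vω i₁} {p₂ : Vω i₂}

def wedgeInl (p₂ : Vω i₂) (a : Vω i₁) : WedgeV Vω i₁ i₂ p₁ p₂ := Quot.mk _ (Sum.inl a)

def wedgeInr (p₁ : Vω i₁) (b : Vω i₂) : WedgeV Vω i₁ i₂ p₁ p₂ := Quot.mk _ (Sum.inr b)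

lemma wedgeInl_basepoint : (wedgeInl p₂ p₁ : WedgeV Vω i₁ i₂ p₁ p₂) = wedgeInr p₁ p₂ :=
  Quot.sound ⟨rfl, rfl⟩

lemma isGraphMap_wedgeInl : IsGraphMap (Eω i₁) (wedgeRel Vω Eω i₁ i₂ p₁ p₂) (wedgeInl p₂) :=
  fun a b h => Or.inl (Or.inl ⟨a, b, h, rfl, rfl⟩)

lemma isGraphMap_wedgeInr : IsGraphMap (Eω i₂) (wedgeRel Vω Eω i₁ i₂ p₁ p₂) (wedgeInr p₁) :=
  fun a b h => Or.inl (Or.inr ⟨a, b, h, rfl, rfl⟩)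

@[elab_as_elim]
lemma WedgeV.ind {P : WedgeV Vω i₁ i₂ p₁ p₂ → Prop} (inl : ∀ a, P (wedgeInl p₂ a))
    (inr : ∀ b, P (wedgeInr p₁ b)) (z : WedgeV Vω i₁ i₂ p₁ p₂) : P z := by
  induction z using Quot.ind with
  | mk s => cases s with
    | inl a => exact inl a
    | inr b => exact inr b

lemma reflexive_wedgeRel (hEω : ∀ i, Reflexive (Eω i)) :
    Reflexive (wedgeRel Vω Eω i₁ i₂ p₁ p₂) := by
  intro z
  induction z using WedgeV.ind with
  | inl a => exact Or.inl ⟨a, a, hEω i₁ a, rfl, rfl⟩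
  | inr b => exact Or.inr ⟨b, b, hEω i₂ b, rfl, rfl⟩

lemma repRel_wedge_basepoint (z : WedgeV Vω i₁ i₂ p₁ p₂) :
    repRel Vω Eω (wedgeRel Vω Eω i₁ i₂ p₁ p₂) z (wedgeInl p₂ p₁) := by
  induction z using WedgeV.ind with
  | inl a => exact ⟨i₁, _, isGraphMap_wedgeInl, ⟨a, rfl⟩, ⟨p₁, rfl⟩⟩
  | inr b => exact ⟨i₂, _, isGraphMap_wedgeInr, ⟨b, rfl⟩, ⟨p₂, wedgeInl_basepoint.symm⟩⟩

def wedgeLift {V : Type} (φ₁ : Vω i₁ → V) (φ₂ : Vω i₂ → V) (h : φ₁ p₁ = φ₂ p₂) :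
    WedgeV Vω i₁ i₂ p₁ p₂ → V :=
  Quot.lift (Sum.elim φ₁ φ₂) (by rintro _ _ ⟨rfl, rfl⟩; exact h)

lemma isGraphMap_wedgeLift {V : Type} {E : V → V → Prop} {φ₁ : Vω i₁ → V} {φ₂ : Vω i₂ → V}
    (h : φ₁ p₁ = φ₂ p₂) (hφ₁ : IsGraphMap (Eω i₁) E φ₁) (hφ₂ : IsGraphMap (Eω i₂) E φ₂) :
    IsGraphMap (wedgeRel Vω Eω i₁ i₂ p₁ p₂) E (wedgeLift φ₁ φ₂ h) := by
  rintro x y (⟨a, b, hab, rfl, rfl⟩ | ⟨a, b, hab, rfl, rfl⟩)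
  · exact hφ₁ a b hab
  · exact hφ₂ a b hab

lemma repRel_transitive_of_wedgeCovered (hwc : WedgeCovered Vω Eω) {V : Type}
    (E : V → V → Prop) : Transitive (repRel Vω Eω E) := by
  rintro u v w ⟨i₁, φ₁, hφ₁, ⟨a₁, rfl⟩, ⟨b₁, hb₁⟩⟩ ⟨i₂, φ₂, hφ₂, ⟨a₂, ha₂⟩, ⟨b₂, rfl⟩⟩
  have hglue : φ₁ b₁ = φ₂ a₂ := hb₁.trans ha₂.symm
  obtain ⟨i, φ, hφ, ⟨a, ha⟩, ⟨b, hb⟩⟩ := hwc i₁ i₂ b₁ a₂ (wedgeInl a₂ a₁) (wedgeInr b₁ b₂)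
  exact ⟨i, wedgeLift φ₁ φ₂ hglue ∘ φ, (isGraphMap_wedgeLift hglue hφ₁ hφ₂).comp hφ,
    ⟨a, congrArg (wedgeLift φ₁ φ₂ hglue) ha⟩, ⟨b, congrArg (wedgeLift φ₁ φ₂ hglue) hb⟩⟩

lemma wedgeCovered_of_clustering [∀ i, Finite (Vω i)] (hEω : ∀ i, Reflexive (Eω i))
    (hcl : ∀ (V : Type) [Finite V] (E : V → V → Prop), Reflexive E →
      Transitive (repRel Vω Eω E)) : WedgeCovered Vω Eω := by
  intro i₁ i₂ p₁ p₂ x y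
  have : Finite (WedgeV Vω i₁ i₂ p₁ p₂) := Quot.finite _
  exact hcl _ _ (reflexive_wedgeRel hEω) (repRel_wedge_basepoint x)
    (repRel_symmetric _ (repRel_wedge_basepoint y))

end Wedge

/-- Ω is wedge covered iff F^Ω is a clustering functor
(symmetric and transitive output on every graph). -/
theorem wedge_covered_iff_clustering {ι : Type} (Vω : ι → Type) [∀ i, Finite (Vω i)]
    (Eω : ∀ i, Vω i → Vω i → Prop) (hEω : ∀ i, Reflexive (Eω i)) :
    (∀ (i₁ i₂ : ι) (p₁ : Vω i₁) (p₂ : Vω i₂) (x y : WedgeV Vω i₁ i₂ p₁ p₂),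
        ∃ (i : ι) (φ : Vω i → WedgeV Vω i₁ i₂ p₁ p₂),
          IsGraphMap (Eω i) (wedgeRel Vω Eω i₁ i₂ p₁ p₂) φ ∧
          (∃ a, φ a = x) ∧ (∃ b, φ b = y)) ↔
    (∀ (V : Type) [Finite V] (E : V → V → Prop), Reflexive E →
        Symmetric (repRel Vω Eω E) ∧ Transitive (repRel Vω Eω E)) := by
  refine ⟨fun hwc V _ E _ => ⟨repRel_symmetric E, repRel_transitive_of_wedgeCovered hwc E⟩,
    fun hcl => wedgeCovered_of_clustering hEω fun V _ E hE => (hcl V E hE).2⟩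
end

section
/- Let F be a vertex-preserving endofunctor from directed graphs to clustering graphs (images are symmetric and transitive) satisfying F(L2)=D2 and F(K2)=K2. Then F^rec ≤ F ≤ F^nrec, where F^rec(G) has an arrow v→v' iff v and v' are joined by a chain of bidirectional arrows in G, and F^nrec(G) has an arrow v→v' iff v and v' lie on a common directed cycle of G (equivalently v↝v' and v'↝v). -/
/-
Pulling back along the graph map `K2 → G` that picks a bidirectional arrow `b ⇄ c` shows
`b ~ c` in `F(G)`, and transitivity of `F(G)` extends this to chains of such arrows.
Conversely, if `v'` is not reachable from `v`, collapsing the set reachable from `v` to the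
head of `L2` and its complement to the tail is a graph map `G → L2`; as `F(L2) = D2`, it
separates `v` from `v'` in `F(G)`. Symmetry of `F(G)` gives reachability in both directions.
-/

namespace GraphFunctor

theorem isGraphMap_K2rel_of_bidirected {V : Type} {E : V → V → Prop} {b c : V}
    (hbc : E b c) (hcb : E c b) : IsGraphMap K2rel E ![b, c] := by
  intro x y _
  fin_cases x <;> fin_cases y <;> simp [hbc, hcb]

theorem isGraphMap_L2rel_indicator {V : Type} {E : V → V → Prop} (S : Set V)
    [DecidablePred (· ∈ S)] (hS : ∀ x y, E x y → x ∈ S → y ∈ S) :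
    IsGraphMap E L2rel (fun x => if x ∈ S then 1 else 0) := by
  intro x y hxy
  by_cases hx : x ∈ S
  · simp [hx, hS x y hxy hx]
  · by_cases hy : y ∈ S <;> simp [L2rel, hx, hy]

variable (F : GraphFunctor)

theorem obj_of_bidirected (hK : F.obj (Fin 2) K2rel = K2rel) {V : Type} [Finite V]
    {E : V → V → Prop} (hE : Reflexive E) {b c : V} (hbc : E b c) (hcb : E c b) :
    F.obj V E b c := by
  have hφ := F.map (Fin 2) V K2rel E ![b, c] (fun _ => trivial) hE
    (isGraphMap_K2rel_of_bidirected hbc hcb)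
  rw [hK] at hφ
  rcases hφ 0 1 trivial with h | h
  · exact h
  · have hbc : b = c := h
    exact hbc ▸ F.refl V E hE b

theorem reflTransGen_of_obj (hL : F.obj (Fin 2) L2rel = D2rel) {V : Type} [Finite V]
    {E : V → V → Prop} (hE : Reflexive E) {a b : V} (hab : F.obj V E a b) :
    Relation.ReflTransGen E a b := by
  classical
  by_contra hnot
  have hφ := F.map V (Fin 2) E L2rel _ hE (fun _ => Or.inl rfl)
    (isGraphMap_L2rel_indicator {x | Relation.ReflTransGen E a x} fun _ _ hxy hx => hx.tail hxy)
  rw [hL] at hφ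
  simpa [D2rel, hnot, Relation.ReflTransGen.refl] using hφ a b hab

end GraphFunctor

/-- any clustering-valued endofunctor satisfying the axiom of value
lies between reciprocal and non-reciprocal clustering: F^rec ≤ F ≤ F^nrec. -/
theorem rec_le_F_le_nrec (F : GraphFunctor)
    (hclust : ∀ (V : Type) [Finite V] (E : V → V → Prop), Reflexive E →
        Symmetric (F.obj V E) ∧ Transitive (F.obj V E))
    (hL : F.obj (Fin 2) L2rel = D2rel) (hK : F.obj (Fin 2) K2rel = K2rel) :
    ∀ (V : Type) [Finite V] (E : V → V → Prop), Reflexive E → ∀ v v',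
      (Relation.ReflTransGen (fun a b => E a b ∧ E b a) v v' → F.obj V E v v') ∧
      (F.obj V E v v' → Relation.ReflTransGen E v v' ∧ Relation.ReflTransGen E v' v) := by
  intro V _ E hE v v'
  obtain ⟨hsym, htrans⟩ := hclust V E hE
  have hequiv : Equivalence (F.obj V E) :=
    ⟨F.refl V E hE, fun h => hsym h, fun h h' => htrans h h'⟩
  refine ⟨fun h => Relation.reflTransGen_le_of_equivalence_of_le hequiv ?_ v v' h,
    fun h => ⟨F.reflTransGen_of_obj hL hE h, F.reflTransGen_of_obj hL hE (hsym h)⟩⟩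
  exact fun b c hbc => F.obj_of_bidirected hK hE hbc.1 hbc.2
end
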